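/- Let (X,T) be a minimal weakly mixing topological dynamical system and let d ≥ 1 be an integer. Then for every x ∈ X, the closure of the F^{[d]}-orbit of the diagonal point x^{[d]} equals {x} × X_*^{[d]} (the set of all points of X^{[d]} whose coordinate at ε = (0,…,0) equals x), and this set is a minimal closed invariant set for the action of the face group F^{[d]}. -/

import Mathlib

open Set

/-- The group of self-homeomorphisms of a topological space,
with `(f * g) x = f (g x)`. -/
instance homeomorphGroup {X : Type*} [TopologicalSpace X] : Group (X ≃ₜ X) where
  mul f g := g.trans f
  one := Homeomorph.refl X
  inv := Homeomorph.symm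
  mul_assoc f g h := rfl
  one_mul f := by ext x; rfl
  mul_one f := by ext x; rfl
  inv_mul_cancel f := by ext x; exact f.symm_apply_apply x

/-- `n · ε = n₁ε₁ + ⋯ + n_dε_d`. -/
def nDot {d : ℕ} (n : Fin d → ℤ) (ε : Fin d → Bool) : ℤ :=
  ∑ i, if ε i then n i else 0

/-- The vertex `(0,…,0)` of the cube `{0,1}^d`. -/
def v0 (d : ℕ) : Fin d → Bool := fun _ => false

/-- A topological dynamical system `(X,T)` is minimal if every orbit is dense. -/
def IsMinimalTDS {X : Type*} [TopologicalSpace X] (T : X ≃ₜ X) : Prop :=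
  ∀ x : X, Dense (Set.range fun n : ℤ => (T ^ n) x)

/-- The dynamical parallelepiped `Q^{[d]}(X)`: the closure in `X^{[d]} = X^({0,1}^d)`
of the set of points `(T^{n·ε} x)_{ε ∈ {0,1}^d}`, `x ∈ X`, `n ∈ ℤ^d`. -/
def cubeQ {X : Type*} [TopologicalSpace X] (T : X ≃ₜ X) (d : ℕ) :
    Set ((Fin d → Bool) → X) :=
  closure {y | ∃ (x : X) (n : Fin d → ℤ), y = fun ε => (T ^ nDot n ε) x}

/-- The regionally proximal relation of order `k` (for `k = 0` this is all of `X × X`). -/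
def RP {X : Type*} [MetricSpace X] (T : X ≃ₜ X) (k : ℕ) : Set (X × X) :=
  {p | ∀ δ > 0, ∃ (x' y' : X) (n : Fin k → ℤ),
    dist p.1 x' < δ ∧ dist p.2 y' < δ ∧
    ∀ ε : Fin k → Bool, ε ≠ v0 k →
      dist ((T ^ nDot n ε) x') ((T ^ nDot n ε) y') < δ}

/-- A factor map between topological dynamical systems: a continuous surjection
intertwining the actions. -/
def IsFactorMap {X Z : Type*} [TopologicalSpace X] [TopologicalSpace Z]
    (T : X ≃ₜ X) (S : Z ≃ₜ Z) (π : X → Z) : Prop :=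
  Continuous π ∧ Function.Surjective π ∧ ∀ x, π (T x) = S (π x)

/-- The diagonal homeomorphism `T^{[d]} = T × ⋯ × T` of `X^{[d]}`. -/
def diagHomeo {X : Type*} [TopologicalSpace X] (T : X ≃ₜ X) (d : ℕ) :
    ((Fin d → Bool) → X) ≃ₜ ((Fin d → Bool) → X) :=
  Homeomorph.piCongrRight fun _ : Fin d → Bool => T

/-- `w` is a minimal point of the homeomorphism `S`. -/
def IsMinimalPoint {W : Type*} [TopologicalSpace W] (S : W ≃ₜ W) (w : W) : Prop :=
  ∀ y ∈ closure (Set.range fun n : ℤ => (S ^ n) w),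
    closure (Set.range fun n : ℤ => (S ^ n) y)
      = closure (Set.range fun n : ℤ => (S ^ n) w)

/-- The `j`-th face transformation `T_j^{[d]}` of `X^{[d]}`. -/
def faceHomeo {X : Type*} [TopologicalSpace X] {d : ℕ} (T : X ≃ₜ X) (j : Fin d) :
    ((Fin d → Bool) → X) ≃ₜ ((Fin d → Bool) → X) :=
  Homeomorph.piCongrRight fun ε : Fin d → Bool =>
    if ε j then T else Homeomorph.refl X

/-- The face group `F^{[d]}`: the group of homeomorphisms of `X^{[d]}`
generated by the face transformations. -/
def faceGroup {X : Type*} [TopologicalSpace X] (T : X ≃ₜ X) (d : ℕ) :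
    Subgroup (((Fin d → Bool) → X) ≃ₜ ((Fin d → Bool) → X)) :=
  Subgroup.closure (Set.range (faceHomeo (d := d) T))

/-- The orbit of a point under a group of homeomorphisms. -/
def groupOrbit {W : Type*} [TopologicalSpace W] (G : Subgroup (W ≃ₜ W)) (w : W) : Set W :=
  {y | ∃ g ∈ G, g w = y}

/-- The homeomorphism `id × T_*^{[d]}` of `X^{[d]}`, fixing the `(0,…,0)`-coordinate
and applying `T` to every other coordinate. -/
def idFaceHomeo {X : Type*} [TopologicalSpace X] (T : X ≃ₜ X) (d : ℕ) :
    ((Fin d → Bool) → X) ≃ₜ ((Fin d → Bool) → X) :=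
  Homeomorph.piCongrRight fun ε : Fin d → Bool =>
    if ε = v0 d then Homeomorph.refl X else T

/-- A system `(X,T)` is weakly mixing if `(X × X, T × T)` is topologically transitive. -/
def IsWeaklyMixing {X : Type*} [TopologicalSpace X] (T : X ≃ₜ X) : Prop :=
  ∀ U V : Set (X × X), IsOpen U → IsOpen V → U.Nonempty → V.Nonempty →
    ∃ n : ℤ, (U ∩ (fun p : X × X => ((T ^ n) p.1, (T ^ n) p.2)) ⁻¹' V).Nonempty

/-!
The orbit of `z` under the face group is `{(T^{n·ε} z_ε)_ε : n ∈ ℤ^d}`, so its closure `C` lies in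
`{z' | z' 0 = z 0}`; for the converse one shows, by induction on a set `E` of nonzero vertices,
that `C` takes every prescribed pattern of values on `E`. To add a vertex `εs`, weak mixing
(through Furstenberg's intersection lemma, applied one coordinate of `n` at a time) makes the
face maps with `n·εs = 0` act topologically transitively on `X^E`, so by Baire they have a point
with dense orbit there. This yields points of `C` with every pattern on `E` and a common value `a`
at `εs`; applying `T_j^k` for some `j ∈ εs`, minimality of `T` frees the value at `εs`.
-/

section HittingTimes

variable {X : Type*} [TopologicalSpace X] {T : X ≃ₜ X}

def hittingTimes (T : X ≃ₜ X) (U V : Set X) : Set ℤ := {n | ∃ p ∈ U, (T ^ n) p ∈ V}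

theorem zpow_add_apply (T : X ≃ₜ X) (a b : ℤ) (x : X) :
    (T ^ (a + b)) x = (T ^ a) ((T ^ b) x) := by
  rw [zpow_add]; rfl

theorem add_mem_hittingTimes_iff {U V : Set X} {a b : ℤ} :
    a + b ∈ hittingTimes T U V ↔ a ∈ hittingTimes T ((T ^ b) '' U) V := by
  simp only [hittingTimes, mem_ofPred_eq, exists_mem_image, zpow_add_apply]

theorem neg_mem_hittingTimes_iff {U V : Set X} {n : ℤ} :
    -n ∈ hittingTimes T U V ↔ n ∈ hittingTimes T V U := by
  constructor
  · rintro ⟨p, hp, hpV⟩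
    exact ⟨(T ^ (-n)) p, hpV, by rwa [← zpow_add_apply, add_neg_cancel, zpow_zero]⟩
  · rintro ⟨p, hp, hpU⟩
    exact ⟨(T ^ n) p, hpU, by rwa [← zpow_add_apply, neg_add_cancel, zpow_zero]⟩

variable {U₁ V₁ U₂ V₂ : Set X}

theorem IsWeaklyMixing.inter_hittingTimes_nonempty (hwm : IsWeaklyMixing T)
    (hU₁ : IsOpen U₁) (hU₁' : U₁.Nonempty) (hV₁ : IsOpen V₁) (hV₁' : V₁.Nonempty)
    (hU₂ : IsOpen U₂) (hU₂' : U₂.Nonempty) (hV₂ : IsOpen V₂) (hV₂' : V₂.Nonempty) :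
    (hittingTimes T U₁ V₁ ∩ hittingTimes T U₂ V₂).Nonempty := by
  obtain ⟨n, ⟨p, q⟩, ⟨hp, hq⟩, hpV, hqV⟩ := hwm _ _ (hU₁.prod hU₂) (hV₁.prod hV₂)
    (hU₁'.prod hU₂') (hV₁'.prod hV₂')
  exact ⟨n, ⟨p, hp, hpV⟩, ⟨q, hq, hqV⟩⟩

/-- Furstenberg's intersection lemma: `N(A,B) ⊆ N(U₁,V₁) ∩ N(U₂,V₂)` for
`A = U₁ ∩ T^{-k} U₂`, `B = V₁ ∩ T^{-k} V₂` and any `k ∈ N(U₁,U₂) ∩ N(V₁,V₂)`. -/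
theorem IsWeaklyMixing.exists_hittingTimes_subset_inter (hwm : IsWeaklyMixing T)
    (hU₁ : IsOpen U₁) (hU₁' : U₁.Nonempty) (hV₁ : IsOpen V₁) (hV₁' : V₁.Nonempty)
    (hU₂ : IsOpen U₂) (hU₂' : U₂.Nonempty) (hV₂ : IsOpen V₂) (hV₂' : V₂.Nonempty) :
    ∃ A B : Set X, IsOpen A ∧ A.Nonempty ∧ IsOpen B ∧ B.Nonempty ∧
      hittingTimes T A B ⊆ hittingTimes T U₁ V₁ ∩ hittingTimes T U₂ V₂ := by
  obtain ⟨k, ⟨p, hp, hpU⟩, ⟨q, hq, hqV⟩⟩ :=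
    hwm.inter_hittingTimes_nonempty hU₁ hU₁' hU₂ hU₂' hV₁ hV₁' hV₂ hV₂'
  refine ⟨U₁ ∩ (T ^ k) ⁻¹' U₂, V₁ ∩ (T ^ k) ⁻¹' V₂,
    hU₁.inter (hU₂.preimage (T ^ k).continuous), ⟨p, hp, hpU⟩,
    hV₁.inter (hV₂.preimage (T ^ k).continuous), ⟨q, hq, hqV⟩, ?_⟩
  rintro n ⟨r, ⟨hrU₁, hrU₂⟩, hrV₁, hrV₂⟩
  refine ⟨⟨r, hrU₁, hrV₁⟩, ⟨(T ^ k) r, hrU₂, ?_⟩⟩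
  rwa [← zpow_add_apply, add_comm, zpow_add_apply]

theorem IsWeaklyMixing.exists_forall_mem_hittingTimes [Nonempty X] (hwm : IsWeaklyMixing T)
    {ι : Type*} [Finite ι] (U V : ι → Set X) (hU : ∀ i, IsOpen (U i)) (hU' : ∀ i, (U i).Nonempty)
    (hV : ∀ i, IsOpen (V i)) (hV' : ∀ i, (V i).Nonempty) :
    ∃ n : ℤ, ∀ i, n ∈ hittingTimes T (U i) (V i) := by
  classical
  have key : ∀ s : Finset ι, ∃ A B : Set X, IsOpen A ∧ A.Nonempty ∧ IsOpen B ∧ B.Nonempty ∧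
      hittingTimes T A B ⊆ ⋂ i ∈ s, hittingTimes T (U i) (V i) := by
    intro s
    induction s using Finset.induction_on with
    | empty => exact ⟨univ, univ, isOpen_univ, univ_nonempty, isOpen_univ, univ_nonempty, by simp⟩
    | insert i s _ ih =>
      obtain ⟨A, B, hA, hA', hB, hB', hAB⟩ := ih
      obtain ⟨A', B', hA₁, hA₁', hB₁, hB₁', hAB'⟩ :=
        hwm.exists_hittingTimes_subset_inter (hU i) (hU' i) (hV i) (hV' i) hA hA' hB hB'
      refine ⟨A', B', hA₁, hA₁', hB₁, hB₁', fun n hn => ?_⟩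
      rw [Finset.set_biInter_insert]
      exact ⟨(hAB' hn).1, hAB (hAB' hn).2⟩
  cases nonempty_fintype ι
  obtain ⟨A, B, hA, hA', hB, hB', hAB⟩ := key Finset.univ
  obtain ⟨n, hn, -⟩ := hwm.inter_hittingTimes_nonempty hA hA' hB hB' hA hA' hB hB'
  exact ⟨n, fun i => mem_iInter₂.mp (hAB hn) i (Finset.mem_univ i)⟩

end HittingTimes

section LinearForms

variable {X : Type*} [TopologicalSpace X] [Nonempty X] {T : X ≃ₜ X}

open Matrix

theorem IsWeaklyMixing.exists_forall_dotProduct_mem_hittingTimes (hwm : IsWeaklyMixing T)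
    {ι : Type*} [Finite ι] {D : ℕ} (c : ι → Fin D → ℤ) (hc : ∀ i j, c i j ∈ ({-1, 0, 1} : Set ℤ))
    (hc₀ : ∀ i, c i ≠ 0) (U V : ι → Set X) (hU : ∀ i, IsOpen (U i))
    (hU' : ∀ i, (U i).Nonempty) (hV : ∀ i, IsOpen (V i)) (hV' : ∀ i, (V i).Nonempty) :
    ∃ m : Fin D → ℤ, ∀ i, c i ⬝ᵥ m ∈ hittingTimes T (U i) (V i) := by
  induction D generalizing ι with
  | zero => exact ⟨0, fun i => absurd (Subsingleton.elim _ _) (hc₀ i)⟩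
  | succ D ih =>
    have hcons (i) : c i = vecCons (c i 0) (vecTail (c i)) := (cons_head_tail _).symm
    obtain ⟨m, hm⟩ := ih (ι := {i // c i 0 = 0}) (fun i => vecTail (c i))
      (fun i j => hc i j.succ)
      (fun i h => hc₀ i (by rw [hcons, i.2, h, cons_zero_zero]))
      (fun i => U i) (fun i => V i) (fun i => hU i) (fun i => hU' i) (fun i => hV i)
      (fun i => hV' i)
    -- the remaining forms are `±s + b i`; shifting `U i` by `T ^ b i` reduces them to `±s`
    set b : ι → ℤ := fun i => vecTail (c i) ⬝ᵥ m
    let A (i : {i // c i 0 ≠ 0}) : Set X := if c i 0 = 1 then (T ^ b i) '' U i else V i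
    let B (i : {i // c i 0 ≠ 0}) : Set X := if c i 0 = 1 then V i else (T ^ b i) '' U i
    have hTU (i) : IsOpen ((T ^ b i) '' U i) ∧ ((T ^ b i) '' U i).Nonempty :=
      ⟨(T ^ b i).isOpenMap _ (hU i), (hU' i).image _⟩
    have hA (i) : IsOpen (A i) ∧ (A i).Nonempty := by
      unfold A; split_ifs; exacts [hTU i, ⟨hV i, hV' i⟩]
    have hB (i) : IsOpen (B i) ∧ (B i).Nonempty := by
      unfold B; split_ifs; exacts [⟨hV i, hV' i⟩, hTU i]
    obtain ⟨s, hs⟩ := hwm.exists_forall_mem_hittingTimes A B (fun i => (hA i).1)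
      (fun i => (hA i).2) (fun i => (hB i).1) (fun i => (hB i).2)
    refine ⟨vecCons s m, fun i => ?_⟩
    rw [dotProduct_cons]
    change c i 0 * s + b i ∈ _
    by_cases h0 : c i 0 = 0
    · rw [h0, zero_mul, zero_add]
      exact hm ⟨i, h0⟩
    have hs := hs ⟨i, h0⟩
    obtain h | h | h : c i 0 = -1 ∨ c i 0 = 0 ∨ c i 0 = 1 := by simpa using hc i 0
    · simp only [A, B, h, if_neg (by norm_num : (-1 : ℤ) ≠ 1)] at hs
      rwa [h, neg_one_mul, add_mem_hittingTimes_iff, neg_mem_hittingTimes_iff]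
    · exact absurd h h0
    · simp only [A, B, h, if_true] at hs
      rwa [h, one_mul, add_mem_hittingTimes_iff]

end LinearForms

theorem exists_dense_range_of_forall_inter_preimage_nonempty {Y ι : Type*} [TopologicalSpace Y]
    [BaireSpace Y] [SecondCountableTopology Y] [Nonempty Y] (f : ι → Y → Y)
    (hf : ∀ i, Continuous (f i))
    (htrans : ∀ U V : Set Y, IsOpen U → U.Nonempty → IsOpen V → V.Nonempty →
      ∃ i, (U ∩ f i ⁻¹' V).Nonempty) :
    ∃ y, Dense (range fun i => f i y) := by
  obtain ⟨B, hBc, hB₀, hB⟩ := TopologicalSpace.exists_countable_basis Y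
  have hdense : Dense (⋂ V ∈ B, ⋃ i, f i ⁻¹' V) := by
    refine dense_biInter_of_isOpen
      (fun V hV => isOpen_iUnion fun i => (hB.isOpen hV).preimage (hf i))
      hBc fun V hV => dense_iff_inter_open.mpr fun U hU hU' => ?_
    obtain ⟨i, y, hyU, hyV⟩ := htrans U V hU hU' (hB.isOpen hV)
      (nonempty_iff_ne_empty.mpr (ne_of_mem_of_not_mem hV hB₀))
    exact ⟨y, hyU, mem_iUnion.mpr ⟨i, hyV⟩⟩
  obtain ⟨y, hy⟩ := hdense.nonempty
  refine ⟨y, hB.dense_iff.mpr fun V hV _ => ?_⟩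
  obtain ⟨i, hi⟩ := mem_iUnion.mp (mem_iInter₂.mp hy V hV)
  exact ⟨f i y, hi, i, rfl⟩

section Cube

open Matrix

variable {d : ℕ}

def boolVec (ε : Fin d → Bool) : Fin d → ℤ := fun j => if ε j then 1 else 0

theorem boolVec_injective : Function.Injective (boolVec (d := d)) := by
  intro ε ε' h
  funext j
  have := congrFun h j
  cases hε : ε j <;> cases hε' : ε' j <;> simp_all [boolVec]

theorem boolVec_v0 : boolVec (v0 d) = 0 := by
  funext j; simp [boolVec, v0]

theorem nDot_eq_dotProduct (n : Fin d → ℤ) (ε : Fin d → Bool) : nDot n ε = boolVec ε ⬝ᵥ n := by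
  simp [nDot, boolVec, dotProduct]

theorem nDot_add (m n : Fin d → ℤ) (ε : Fin d → Bool) : nDot (m + n) ε = nDot m ε + nDot n ε := by
  simp only [nDot_eq_dotProduct, dotProduct_add]

theorem nDot_single (j : Fin d) (k : ℤ) (ε : Fin d → Bool) :
    nDot (Pi.single j k) ε = if ε j then k else 0 := by
  simp [nDot_eq_dotProduct, dotProduct_single, boolVec]

theorem nDot_v0 (n : Fin d → ℤ) : nDot n (v0 d) = 0 := by
  simp [nDot_eq_dotProduct, boolVec_v0]

theorem exists_true_of_ne_v0 {ε : Fin d → Bool} (h : ε ≠ v0 d) : ∃ j, ε j = true := by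
  by_contra! hε
  exact h (funext fun j => by simpa [v0] using hε j)

variable {X : Type*} [TopologicalSpace X]

def faceHom (T : X ≃ₜ X) (d : ℕ) :
    Multiplicative (Fin d → ℤ) →* (((Fin d → Bool) → X) ≃ₜ ((Fin d → Bool) → X)) where
  toFun n := Homeomorph.piCongrRight fun ε => T ^ nDot n.toAdd ε
  map_one' := by ext z ε; simp [nDot]
  map_mul' m n := by ext z ε; simp [nDot_add, zpow_add_apply]

@[simp]
theorem faceHom_apply (T : X ≃ₜ X) (n : Multiplicative (Fin d → ℤ)) (z : (Fin d → Bool) → X)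
    (ε : Fin d → Bool) : faceHom T d n z ε = (T ^ nDot n.toAdd ε) (z ε) := rfl

theorem faceHom_single (T : X ≃ₜ X) (j : Fin d) :
    faceHom T d (.ofAdd (Pi.single j 1)) = faceHomeo T j := by
  ext z ε
  simp only [faceHom_apply, toAdd_ofAdd, nDot_single, faceHomeo, Homeomorph.piCongrRight_apply]
  split_ifs <;> simp

theorem faceGroup_eq_range (T : X ≃ₜ X) : faceGroup T d = (faceHom T d).range := by
  apply le_antisymm
  · rw [faceGroup, Subgroup.closure_le]
    rintro _ ⟨j, rfl⟩
    exact ⟨_, faceHom_single T j⟩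
  · rintro _ ⟨n, rfl⟩
    have hn : n = ∏ j, (Multiplicative.ofAdd (Pi.single j (1 : ℤ))) ^ n.toAdd j := by
      apply Multiplicative.toAdd.injective
      funext i
      simp [toAdd_prod, Finset.sum_apply, Pi.single_apply]
    change n ∈ (faceGroup T d).comap (faceHom T d)
    rw [hn]
    refine Subgroup.prod_mem _ fun j _ => Subgroup.zpow_mem _ ?_ _
    rw [Subgroup.mem_comap, faceHom_single]
    exact Subgroup.subset_closure ⟨j, rfl⟩

theorem groupOrbit_faceGroup (T : X ≃ₜ X) (z : (Fin d → Bool) → X) :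
    groupOrbit (faceGroup T d) z = range fun n => faceHom T d n z := by
  ext y
  simp [groupOrbit, faceGroup_eq_range]

end Cube

section FaceSubgroup

open Matrix

variable {d : ℕ} {X : Type*} [TopologicalSpace X] [Nonempty X] {T : X ≃ₜ X}
  {εs : Fin d → Bool} {js : Fin d}

theorem IsWeaklyMixing.exists_nDot_eq_zero_forall_mem_hittingTimes (hwm : IsWeaklyMixing T)
    (hjs : εs js = true) {ι : Type*} [Finite ι] (e : ι → Fin d → Bool) (he₀ : ∀ i, e i ≠ v0 d)
    (hes : ∀ i, e i ≠ εs) (U V : ι → Set X) (hU : ∀ i, IsOpen (U i))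
    (hU' : ∀ i, (U i).Nonempty) (hV : ∀ i, IsOpen (V i)) (hV' : ∀ i, (V i).Nonempty) :
    ∃ n : Fin d → ℤ, nDot n εs = 0 ∧ ∀ i, nDot n (e i) ∈ hittingTimes T (U i) (V i) := by
  -- `n = m - (m·εs) e_js` ranges over `{n | n·εs = 0}`, and `n·ε` is a `{-1,0,1}`-form in `m`
  let c (ε : Fin d → Bool) : Fin d → ℤ := boolVec ε - if ε js then boolVec εs else 0
  have hnDot (m : Fin d → ℤ) (ε : Fin d → Bool) :
      nDot (m - Pi.single js (nDot m εs)) ε = c ε ⬝ᵥ m := by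
    simp only [c, nDot_eq_dotProduct, dotProduct_sub, sub_dotProduct, dotProduct_single]
    split_ifs <;> simp_all [boolVec, mul_comm]
  have hc (i j) : c (e i) j ∈ ({-1, 0, 1} : Set ℤ) := by
    simp only [c, Pi.sub_apply]
    split_ifs <;> simp only [boolVec, Pi.zero_apply] <;> split_ifs <;> simp
  have hc₀ (i) : c (e i) ≠ 0 := by
    simp only [c]
    split_ifs
    · exact sub_ne_zero.mpr (boolVec_injective.ne (hes i))
    · simpa [boolVec_v0] using boolVec_injective.ne (he₀ i)
  obtain ⟨m, hm⟩ := hwm.exists_forall_dotProduct_mem_hittingTimes (fun i => c (e i)) hc hc₀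
    U V hU hU' hV hV'
  refine ⟨m - Pi.single js (nDot m εs), ?_, fun i => by rw [hnDot]; exact hm i⟩
  rw [hnDot]
  simp [c, hjs]

end FaceSubgroup

section CubeClosure

variable {d : ℕ} {X : Type*} [TopologicalSpace X] [CompactSpace X] [T2Space X]
  {T : X ≃ₜ X} {εs : Fin d → Bool} {js : Fin d}
  {E : Finset (Fin d → Bool)} {C : Set ((Fin d → Bool) → X)}

theorem IsMinimalTDS.exists_mem_eqOn_insert (hmin : IsMinimalTDS T) (hjs : εs js = true)
    (hCinv : ∀ n, MapsTo (faceHom T d n) C C) (hC : IsClosed C) {a : X}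
    (ha : ∀ w, ∃ c ∈ C, EqOn c w E ∧ c εs = a) (w : (Fin d → Bool) → X) :
    ∃ c ∈ C, EqOn c w (insert εs E : Finset _) := by
  set S := {u | ∃ c ∈ C, EqOn c w E ∧ c εs = u}
  have hS : IsClosed S := by
    have hEw : IsClosed {c : (Fin d → Bool) → X | EqOn c w E} := by
      simp only [EqOn, ofPred_forall]
      exact isClosed_biInter fun ε _ => isClosed_eq (continuous_apply ε) continuous_const
    have : S = (fun c => c εs) '' (C ∩ {c | EqOn c w E}) := by
      ext u; simp [S, and_assoc]
    rw [this]
    exact ((hC.inter hEw).isCompact.image (continuous_apply εs)).isClosed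
  -- the face map `T_js^k` moves the `εs`-coordinate by `T^k`; undo its effect on `E` beforehand
  have horbit (k : ℤ) : (T ^ k) a ∈ S := by
    let g := Multiplicative.ofAdd (Pi.single js k : Fin d → ℤ)
    obtain ⟨c, hc, hcw, hca⟩ := ha (faceHom T d g⁻¹ w)
    refine ⟨faceHom T d g c, hCinv g hc, fun ε hε => ?_, ?_⟩
    · change (T ^ _) (c ε) = w ε
      rw [hcw hε]
      change (faceHom T d g * faceHom T d g⁻¹) w ε = w ε
      rw [← map_mul, mul_inv_cancel, map_one]
      rfl
    · simp [g, nDot_single, hjs, hca]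
  obtain ⟨c, hc, hcw, hcs⟩ : w εs ∈ S := by
    have hSu : S = univ := eq_univ_of_univ_subset ((hmin a).closure_eq ▸
      closure_minimal (range_subset_iff.mpr horbit) hS)
    exact hSu ▸ mem_univ _
  refine ⟨c, hc, fun ε hε => ?_⟩
  rcases Finset.mem_insert.mp hε with rfl | hε
  exacts [hcs, hcw hε]

variable [SecondCountableTopology X]

theorem IsWeaklyMixing.exists_dense_range_restrict_faceHom [Nonempty X] (hwm : IsWeaklyMixing T)
    (hjs : εs js = true) (hE₀ : v0 d ∉ E) (hEs : εs ∉ E) :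
    ∃ ω : (Fin d → Bool) → X, Dense (range fun n : {n : Fin d → ℤ // nDot n εs = 0} =>
      E.restrict (faceHom T d (.ofAdd n.1) ω)) := by
  let f (n : {n : Fin d → ℤ // nDot n εs = 0}) (y : E → X) : E → X :=
    fun ε => (T ^ nDot n.1 ε) (y ε)
  obtain ⟨y, hy⟩ := exists_dense_range_of_forall_inter_preimage_nonempty f
    (fun n => continuous_pi fun ε => (T ^ _).continuous.comp (continuous_apply ε)) <| by
      rintro U V hU ⟨y, hyU⟩ hV ⟨y', hyV⟩
      obtain ⟨u, hu, huU⟩ := isOpen_pi_iff'.mp hU y hyU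
      obtain ⟨v, hv, hvV⟩ := isOpen_pi_iff'.mp hV y' hyV
      obtain ⟨n, hn₀, hn⟩ := hwm.exists_nDot_eq_zero_forall_mem_hittingTimes hjs
        (fun ε : E => ε.1) (fun ε h => hE₀ (h ▸ ε.2)) (fun ε h => hEs (h ▸ ε.2)) u v
        (fun ε => (hu ε).1) (fun ε => ⟨_, (hu ε).2⟩) (fun ε => (hv ε).1) (fun ε => ⟨_, (hv ε).2⟩)
      choose p hpu hpv using hn
      exact ⟨⟨n, hn₀⟩, p, huU fun ε _ => hpu ε, hvV fun ε _ => hpv ε⟩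
  let x₀ : X := Classical.arbitrary X
  let ω : (Fin d → Bool) → X := fun ε => if h : ε ∈ E then y ⟨ε, h⟩ else x₀
  have hω : E.restrict ω = y := funext fun ε => dif_pos ε.2
  refine ⟨ω, ?_⟩
  rw [← hω] at hy
  exact hy

/-- Take `c ∈ C` agreeing on `E` with a point whose orbit under the face maps with `n·εs = 0` is
dense on `E`: the closure of the orbit of `c` under these maps realises every pattern on `E`,
always with the value `c εs` at `εs`. -/
theorem IsWeaklyMixing.exists_forall_exists_mem_eqOn_apply_eq [Nonempty X]
    (hwm : IsWeaklyMixing T) (hjs : εs js = true) (hE₀ : v0 d ∉ E) (hEs : εs ∉ E)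
    (hC : IsClosed C) (hCinv : ∀ n, MapsTo (faceHom T d n) C C)
    (hCE : ∀ w, ∃ c ∈ C, EqOn c w E) :
    ∃ a : X, ∀ w, ∃ c ∈ C, EqOn c w E ∧ c εs = a := by
  obtain ⟨ω, hω⟩ := hwm.exists_dense_range_restrict_faceHom hjs hE₀ hEs
  obtain ⟨c, hc, hcω⟩ := hCE ω
  set K := closure (range fun n : {n : Fin d → ℤ // nDot n εs = 0} => faceHom T d (.ofAdd n.1) c)
  have hKC : K ⊆ C := closure_minimal (range_subset_iff.mpr fun n => hCinv _ hc) hC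
  have hKs : K ⊆ {c' | c' εs = c εs} :=
    closure_minimal (range_subset_iff.mpr fun n => by simp [n.2])
      (isClosed_eq (continuous_apply εs) continuous_const)
  have hKE : E.restrict '' K = univ := by
    refine eq_univ_of_univ_subset (hω.closure_eq ▸ closure_minimal ?_
      ((isClosed_closure.isCompact.image (Finset.continuous_restrict E)).isClosed))
    rintro _ ⟨n, rfl⟩
    exact ⟨_, subset_closure ⟨n, rfl⟩, funext fun ε => by simp [hcω ε.2]⟩
  refine ⟨c εs, fun w => ?_⟩
  obtain ⟨c', hc'K, hc'w⟩ : E.restrict w ∈ E.restrict '' K := hKE ▸ mem_univ _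
  exact ⟨c', hKC hc'K, fun ε hε => congrFun hc'w ⟨ε, hε⟩, hKs hc'K⟩

variable [Nonempty X]

theorem exists_mem_eqOn_of_invariant (hmin : IsMinimalTDS T) (hwm : IsWeaklyMixing T)
    (hC : IsClosed C) (hCne : C.Nonempty) (hCinv : ∀ n, MapsTo (faceHom T d n) C C)
    (E : Finset (Fin d → Bool)) (hE₀ : v0 d ∉ E) (w : (Fin d → Bool) → X) :
    ∃ c ∈ C, EqOn c w E := by
  induction E using Finset.induction_on generalizing w with
  | empty => exact hCne.imp fun c hc => ⟨hc, by simp⟩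
  | insert εs E hεs ih =>
    obtain ⟨hεs₀, hE₀⟩ : εs ≠ v0 d ∧ v0 d ∉ E := by
      simpa [eq_comm] using hE₀
    obtain ⟨js, hjs⟩ := exists_true_of_ne_v0 hεs₀
    obtain ⟨a, ha⟩ := hwm.exists_forall_exists_mem_eqOn_apply_eq hjs hE₀ hεs hC hCinv (ih hE₀)
    exact hmin.exists_mem_eqOn_insert hjs hCinv hC ha w

theorem closure_groupOrbit_faceGroup (hmin : IsMinimalTDS T) (hwm : IsWeaklyMixing T)
    (z : (Fin d → Bool) → X) :
    closure (groupOrbit (faceGroup T d) z) = {z' | z' (v0 d) = z (v0 d)} := by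
  rw [groupOrbit_faceGroup]
  have hsub : closure (range fun n => faceHom T d n z) ⊆ {z' | z' (v0 d) = z (v0 d)} :=
    closure_minimal (range_subset_iff.mpr fun n => by simp [nDot_v0])
      (isClosed_eq (continuous_apply _) continuous_const)
  refine subset_antisymm hsub fun w hw => ?_
  have hinv (g) : MapsTo (faceHom T d g) (closure (range fun n => faceHom T d n z))
      (closure (range fun n => faceHom T d n z)) :=
    MapsTo.closure (fun _ ⟨n, hn⟩ => ⟨g * n, by rw [← hn]; simp only [map_mul]; rfl⟩)
      (faceHom T d g).continuous
  obtain ⟨c, hc, hcw⟩ := exists_mem_eqOn_of_invariant hmin hwm isClosed_closure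
    (nonempty_of_mem (subset_closure (mem_range_self 1))) hinv
    (Finset.univ.filter (· ≠ v0 d)) (by simp) w
  convert hc
  funext ε
  by_cases hε : ε = v0 d
  · subst hε; exact hw.trans (hsub hc).symm
  · exact (hcw (by simpa using hε)).symm

end CubeClosure

theorem statement16_general {X : Type*} [MetricSpace X] [CompactSpace X]
    (T : X ≃ₜ X) (hmin : IsMinimalTDS T) (hwm : IsWeaklyMixing T)
    (d : ℕ) :
    ∀ x : X,
      (closure (groupOrbit (faceGroup T d) (fun _ => x))
        = {z : (Fin d → Bool) → X | z (v0 d) = x}) ∧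
      ∀ z : (Fin d → Bool) → X, z (v0 d) = x →
        closure (groupOrbit (faceGroup T d) z)
          = {z' : (Fin d → Bool) → X | z' (v0 d) = x} := by
  intro x
  have : Nonempty X := ⟨x⟩
  exact ⟨closure_groupOrbit_faceGroup hmin hwm _,
    fun z hz => hz ▸ closure_groupOrbit_faceGroup hmin hwm z⟩

/-- for a minimal weakly mixing system, for every `x ∈ X` the closure of the
`F^{[d]}`-orbit of `x^{[d]}` is `{x} × X_*^{[d]}`, and this set is a minimal closed
`F^{[d]}`-invariant set (the `F^{[d]}`-orbit of each of its points is dense in it). -/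
theorem statement16 {X : Type*} [MetricSpace X] [CompactSpace X]
    (T : X ≃ₜ X) (hmin : IsMinimalTDS T) (hwm : IsWeaklyMixing T)
    (d : ℕ) (hd : 1 ≤ d) :
    ∀ x : X,
      (closure (groupOrbit (faceGroup T d) (fun _ => x))
        = {z : (Fin d → Bool) → X | z (v0 d) = x}) ∧
      ∀ z : (Fin d → Bool) → X, z (v0 d) = x →
        closure (groupOrbit (faceGroup T d) z)
          = {z' : (Fin d → Bool) → X | z' (v0 d) = x} :=
  statement16_general T hmin hwm d
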